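/- arXiv:1510.00121 — 2 statements merged into one kernel-verified Lean document; each statement's English description precedes it below -/
import Mathlib

section
/- Fix m ≥ 1 and 0 < ε < 1. The set of operators {√(1−ε²)·I} ∪ {ε·R_j : j = 0,...,2^m−1}, where R_j = |0⟩⟨j| acts on C^{2^m} (mapping the j-th standard basis vector to the 0-th and annihilating all others), is linearly independent. Consequently any Kraus representation of the weak error-correcting map ρ ↦ (1−ε²)ρ + ε² Σ_j R_j ρ R_j† requires at least 2^m + 1 Kraus operators. -/
/-!
If `∑ₗ Kₗ ρ Kₗᴴ = ∑ᵢ Eᵢ ρ Eᵢᴴ` for every `ρ`, evaluating both sides at the matrix units shows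
that for every `w`, in the Hilbert–Schmidt inner product, `∑ₗ |⟪Kₗ, w⟫|² = ∑ᵢ |⟪Eᵢ, w⟫|²`.
So every `w` orthogonal to all `Kₗ` is orthogonal to all `Eᵢ`, i.e. `span E ≤ span K`, and a
linearly independent `E` cannot have more members than `K`.

The weak-correction operators are independent: the `ε Rⱼ` are multiples of distinct matrix
units in row `0`, and the identity is not in their span, since it has a nonzero diagonal entry
outside row `0`.
-/

open scoped Matrix ComplexConjugate InnerProductSpace
open Submodule Set

section InnerProductSpace

variable {𝕜 E : Type*} [RCLike 𝕜] [NormedAddCommGroup E] [InnerProductSpace 𝕜 E]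
  {ι κ : Type*} [Fintype ι] [Fintype κ]

theorem span_range_le_of_sum_norm_inner_sq_le {u : ι → E} {v : κ → E}
    (h : ∀ w, ∑ i, ‖⟪u i, w⟫_𝕜‖ ^ 2 ≤ ∑ k, ‖⟪v k, w⟫_𝕜‖ ^ 2) :
    span 𝕜 (range u) ≤ span 𝕜 (range v) := by
  have := FiniteDimensional.span_of_finite 𝕜 (finite_range v)
  rw [span_le, ← orthogonal_orthogonal (span 𝕜 (range v))]
  rintro _ ⟨i, rfl⟩
  refine (mem_orthogonal _ _).2 fun w hw => ?_
  have hv : ∀ k, ⟪v k, w⟫_𝕜 = 0 := fun k => hw _ (subset_span ⟨k, rfl⟩)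
  have hu : ∑ i, ‖⟪u i, w⟫_𝕜‖ ^ 2 = 0 :=
    le_antisymm (by simpa [hv] using h w) (by positivity)
  have := (Finset.sum_eq_zero_iff_of_nonneg fun _ _ => by positivity).1 hu i (Finset.mem_univ i)
  exact inner_eq_zero_symm.1 (by simpa using this)

end InnerProductSpace

theorem LinearIndependent.card_le_card_of_span_le {K V : Type*} [DivisionRing K] [AddCommGroup V]
    [Module K V] {ι κ : Type*} [Fintype ι] [Fintype κ] {v : κ → V} {u : ι → V}
    (hv : LinearIndependent K v) (h : span K (range v) ≤ span K (range u)) :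
    Fintype.card κ ≤ Fintype.card ι :=
  have := FiniteDimensional.span_of_finite K (finite_range u)
  calc Fintype.card κ ≤ (range v).finrank K := linearIndependent_iff_card_le_finrank_span.1 hv
    _ ≤ (range u).finrank K := Submodule.finrank_mono h
    _ ≤ Fintype.card ι := finrank_range_le_card u

namespace Matrix

section Kraus

variable {𝕜 : Type*} [RCLike 𝕜] {m n : Type*}

def krausMap {α : Type*} [Semiring α] [Star α] [Fintype n] {ι : Type*} [Fintype ι]
    (K : ι → Matrix m n α) (ρ : Matrix n n α) : Matrix m m α :=
  ∑ l, K l * ρ * (K l)ᴴ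

noncomputable def vecL2 : Matrix m n 𝕜 ≃ₗ[𝕜] EuclideanSpace 𝕜 (m × n) :=
  (LinearEquiv.curry 𝕜 𝕜 m n).symm.trans (WithLp.linearEquiv 2 𝕜 _).symm

@[simp] theorem vecL2_apply (M : Matrix m n 𝕜) (p : m × n) : vecL2 M p = M p.1 p.2 := rfl

theorem inner_vecL2 [Fintype m] [Fintype n] (M : Matrix m n 𝕜) (w : EuclideanSpace 𝕜 (m × n)) :
    ⟪vecL2 M, w⟫_𝕜 = ∑ p, conj (M p.1 p.2) * w p := by
  simp [PiLp.inner_apply, mul_comm]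

theorem mul_single_mul_conjTranspose_apply [Fintype n] [DecidableEq n]
    (K : Matrix m n 𝕜) (a c : m) (b d : n) :
    (K * single b d (1 : 𝕜) * Kᴴ) a c = K a b * conj (K c d) := by
  simp [mul_apply, single, conjTranspose_apply, ite_mul, ite_and]

theorem sum_norm_inner_vecL2_sq [Fintype m] [Fintype n] [DecidableEq n] {ι : Type*} [Fintype ι]
    (K : ι → Matrix m n 𝕜) (w : EuclideanSpace 𝕜 (m × n)) :
    ((∑ l, ‖⟪vecL2 (K l), w⟫_𝕜‖ ^ 2 : ℝ) : 𝕜) =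
      ∑ p, ∑ q, w p * conj (w q) * krausMap K (single q.2 p.2 1) q.1 p.1 := by
  push_cast
  simp_rw [← RCLike.mul_conj, inner_vecL2, map_sum, map_mul, RCLike.conj_conj, Finset.sum_mul_sum,
    krausMap, sum_apply, mul_single_mul_conjTranspose_apply, Finset.mul_sum]
  rw [Finset.sum_comm]
  refine Finset.sum_congr rfl fun p _ => ?_
  rw [Finset.sum_comm]
  exact Finset.sum_congr rfl fun q _ => Finset.sum_congr rfl fun l _ => by ring

theorem card_le_card_of_krausMap_eq [Fintype m] [Fintype n] [DecidableEq n]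
    {ι κ : Type*} [Fintype ι] [Fintype κ] {K : ι → Matrix m n 𝕜} {E : κ → Matrix m n 𝕜}
    (hE : LinearIndependent 𝕜 E) (h : krausMap K = krausMap E) :
    Fintype.card κ ≤ Fintype.card ι := by
  have hspan : span 𝕜 (range (vecL2 ∘ E)) ≤ span 𝕜 (range (vecL2 ∘ K)) :=
    span_range_le_of_sum_norm_inner_sq_le fun w => by
      have := (sum_norm_inner_vecL2_sq E w).trans (h ▸ sum_norm_inner_vecL2_sq K w).symm
      exact (RCLike.ofReal_injective this).le
  exact (hE.map' vecL2.toLinearMap vecL2.ker).card_le_card_of_span_le hspan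

end Kraus

section SingleRow

variable {R : Type*} [Field R]

theorem linearIndependent_smul_single_row {m n : Type*} [Fintype m] [Fintype n] [DecidableEq m]
    [DecidableEq n] (i₀ : m) {a : R} (ha : a ≠ 0) :
    LinearIndependent R (fun j : n => a • single i₀ j (1 : R)) := by
  have h := ((stdBasis R m n).linearIndependent.comp _ (Prod.mk_right_injective i₀)).units_smul
    fun _ => Units.mk0 a ha
  simp only [Function.comp_def, stdBasis_eq_single] at h
  exact h

theorem smul_one_notMem_span_smul_single_row {n : Type*} [Fintype n] [DecidableEq n]
    {i₀ i : n} (hi : i ≠ i₀) (a : R) {b : R} (hb : b ≠ 0) :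
    b • (1 : Matrix n n R) ∉ span R (range fun j => a • single i₀ j (1 : R)) := by
  have hker : span R (range fun j => a • single i₀ j (1 : R)) ≤
      LinearMap.ker (entryLinearMap R R i i) :=
    span_le.2 <| by rintro _ ⟨j, rfl⟩; simp [hi.symm]
  exact fun hmem => hb (by simpa using hker hmem)

theorem linearIndependent_finSnoc_smul_single_smul_one {n : ℕ} {i₀ i : Fin n} (hi : i ≠ i₀)
    {a b : R} (ha : a ≠ 0) (hb : b ≠ 0) :
    LinearIndependent R (Fin.snoc (fun j => a • single i₀ j (1 : R)) (b • 1) :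
      Fin (n + 1) → Matrix (Fin n) (Fin n) R) :=
  (linearIndependent_smul_single_row i₀ ha).finSnoc (smul_one_notMem_span_smul_single_row hi a hb)

end SingleRow

theorem ofReal_smul_mul_mul_conjTranspose {m n : Type*} [Fintype n] (c : ℝ) (A : Matrix m n ℂ)
    (ρ : Matrix n n ℂ) : (c : ℂ) • A * ρ * ((c : ℂ) • A)ᴴ = ((c ^ 2 : ℝ) : ℂ) • (A * ρ * Aᴴ) := by
  rw [conjTranspose_smul, Complex.star_def, Complex.conj_ofReal, smul_mul, smul_mul,
    Matrix.mul_smul, smul_smul, Complex.ofReal_pow, sq]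

end Matrix

open Matrix

/-- `single i₀ j 1 = |i₀⟩⟨j|`, the paper's `Rⱼ` when `i₀ = 0`; the last operator is `√(1-ε²) I`. -/
noncomputable def weakCorrectionKraus {n : ℕ} (i₀ : Fin n) (ε : ℝ) :
    Fin (n + 1) → Matrix (Fin n) (Fin n) ℂ :=
  Fin.snoc (fun j => (ε : ℂ) • single i₀ j 1) ((√(1 - ε ^ 2) : ℂ) • 1)

theorem linearIndependent_weakCorrectionKraus {n : ℕ} {i₀ i : Fin n} (hi : i ≠ i₀) {ε : ℝ}
    (hε0 : ε ≠ 0) (hε1 : ε ^ 2 < 1) : LinearIndependent ℂ (weakCorrectionKraus i₀ ε) :=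
  linearIndependent_finSnoc_smul_single_smul_one hi (by exact_mod_cast hε0)
    (by exact_mod_cast (Real.sqrt_pos.2 (sub_pos.2 hε1)).ne')

theorem krausMap_weakCorrectionKraus {n : ℕ} (i₀ : Fin n) {ε : ℝ} (hε : ε ^ 2 ≤ 1)
    (ρ : Matrix (Fin n) (Fin n) ℂ) :
    krausMap (weakCorrectionKraus i₀ ε) ρ =
      ((1 - ε ^ 2 : ℝ) : ℂ) • ρ + ((ε ^ 2 : ℝ) : ℂ) • ∑ j, single i₀ j 1 * ρ * (single i₀ j 1)ᴴ := by
  simp only [krausMap, weakCorrectionKraus, Fin.sum_univ_castSucc, Fin.snoc_castSucc,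
    Fin.snoc_last, ofReal_smul_mul_mul_conjTranspose, Real.sq_sqrt (sub_nonneg.2 hε), Matrix.one_mul,
    conjTranspose_one, Matrix.mul_one, Finset.smul_sum, add_comm]

/-- The Kraus operators {√(1-ε²)·I} ∪ {ε·|0⟩⟨j|} are linearly independent, so any
Kraus representation of the weak error-correcting map needs ≥ 2^m + 1 operators. -/
theorem weak_correction_kraus_linearIndependent_and_min_card
    (m : ℕ) (hm : 1 ≤ m) (ε : ℝ) (hε0 : 0 < ε) (hε1 : ε < 1) :
    LinearIndependent ℂ (fun l : Fin (2 ^ m + 1) =>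
      if h : (l : ℕ) < 2 ^ m then
        (ε : ℂ) • Matrix.single (0 : Fin (2 ^ m)) ⟨l, h⟩ (1 : ℂ)
      else ((Real.sqrt (1 - ε ^ 2) : ℝ) : ℂ) • (1 : Matrix (Fin (2 ^ m)) (Fin (2 ^ m)) ℂ)) ∧
    ∀ (L : ℕ) (K : Fin L → Matrix (Fin (2 ^ m)) (Fin (2 ^ m)) ℂ),
      (∀ l, K l ≠ 0) →
      (∀ ρ : Matrix (Fin (2 ^ m)) (Fin (2 ^ m)) ℂ,
        ∑ l, K l * ρ * (K l)ᴴ =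
          (((1 - ε ^ 2 : ℝ)) : ℂ) • ρ +
            ((ε ^ 2 : ℝ) : ℂ) • ∑ j : Fin (2 ^ m),
              Matrix.single (0 : Fin (2 ^ m)) j (1 : ℂ) * ρ *
                (Matrix.single (0 : Fin (2 ^ m)) j (1 : ℂ))ᴴ) →
      L ≥ 2 ^ m + 1 := by
  have hi : (⟨1, Nat.one_lt_two_pow (by omega)⟩ : Fin (2 ^ m)) ≠ 0 := by simp [Fin.ext_iff]
  have hε2 : ε ^ 2 < 1 := by nlinarith
  have hind := linearIndependent_weakCorrectionKraus hi hε0.ne' hε2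
  refine ⟨hind, fun L K _ hK => ?_⟩
  simpa using card_le_card_of_krausMap_eq hind
    (funext fun ρ => (hK ρ).trans (krausMap_weakCorrectionKraus 0 hε2.le ρ).symm)
end

section
/- Let f : ℝ → ℝ solve f' = κ(1 − f) − 3λ·g(t) where 0 ≤ g(t) ≤ 1, with κ, λ > 0 and f(0) = 1. Then for all t ≥ 0, f(t) ≥ 1 − (3λ/κ)(1 − e^{−κt}); in particular f(t) ≥ 1 − 3λ/κ for all t ≥ 0. -/
/-! The gap `φ = f - h` between the fidelity and the solution `h` of `h' = κ(1 - h) - 3λ`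
satisfies `φ' ≥ -κ φ` because `g ≤ 1`. Hence `e^{κt} φ(t)` is nondecreasing, and since
`φ(0) = 0` it stays nonnegative: `f ≥ h` for `t ≥ 0`. Finally `h ≥ 1 - 3λ/κ`. -/

open Real

theorem nonneg_of_hasDerivAt_ge_neg_mul {κ : ℝ} {φ φ' : ℝ → ℝ}
    (hφ : ∀ t, HasDerivAt φ (φ' t) t) (hbound : ∀ t, -κ * φ t ≤ φ' t) (h0 : 0 ≤ φ 0)
    {t : ℝ} (ht : 0 ≤ t) : 0 ≤ φ t := by
  have hu : ∀ s, HasDerivAt (fun s => exp (κ * s) * φ s)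
      (exp (κ * s) * (κ * φ s + φ' s)) s := fun s => by
    have he : HasDerivAt (fun s => exp (κ * s)) (exp (κ * s) * κ) s := by
      simpa using ((hasDerivAt_id s).const_mul κ).exp
    exact (he.mul (hφ s)).congr_deriv (by ring)
  have hmono : Monotone fun s => exp (κ * s) * φ s :=
    monotone_of_hasDerivAt_nonneg hu fun s =>
      mul_nonneg (exp_pos _).le (by linarith [hbound s])
  have hinc : exp (κ * 0) * φ 0 ≤ exp (κ * t) * φ t := hmono ht
  rw [mul_zero, exp_zero, one_mul] at hinc
  exact nonneg_of_mul_nonneg_right (h0.trans hinc) (exp_pos _)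

theorem hasDerivAt_one_sub_mul_one_sub_exp (c κ t : ℝ) :
    HasDerivAt (fun t => 1 - c * (1 - exp (-κ * t))) (-(c * κ * exp (-κ * t))) t := by
  have he : HasDerivAt (fun t => exp (-κ * t)) (exp (-κ * t) * -κ) t := by
    simpa using ((hasDerivAt_id t).const_mul (-κ)).exp
  exact (((he.const_sub 1).const_mul c).const_sub 1).congr_deriv (by ring)

/-- Comparison bound for the CTQEC codeword fidelity: if f' = κ(1−f) − 3λg with
0 ≤ g ≤ 1, f(0) = 1, then f(t) ≥ 1 − (3λ/κ)(1 − e^{−κt}) ≥ 1 − 3λ/κ for t ≥ 0. -/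
theorem ctqec_fidelity_lower_bound (kap lam : ℝ) (hk : 0 < kap) (hl : 0 < lam)
    (f g : ℝ → ℝ) (hg : ∀ t, 0 ≤ g t ∧ g t ≤ 1)
    (hf : ∀ t, HasDerivAt f (kap * (1 - f t) - 3 * lam * g t) t)
    (hf0 : f 0 = 1) :
    ∀ t : ℝ, 0 ≤ t →
      f t ≥ 1 - (3 * lam / kap) * (1 - Real.exp (-kap * t)) ∧
      f t ≥ 1 - 3 * lam / kap := by
  intro t ht
  set c := 3 * lam / kap
  have hck : c * kap = 3 * lam := div_mul_cancel₀ _ hk.ne'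
  have hgap : 0 ≤ f t - (1 - c * (1 - exp (-kap * t))) := by
    refine nonneg_of_hasDerivAt_ge_neg_mul (κ := kap)
      (fun s => (hf s).sub (hasDerivAt_one_sub_mul_one_sub_exp c kap s)) (fun s => ?_)
      (by simp [hf0]) ht
    simp only [Pi.sub_apply]
    rw [hck]
    have hcs : kap * (c * (1 - exp (-kap * s))) = 3 * lam * (1 - exp (-kap * s)) := by
      rw [← hck]; ring
    have hleak : lam * g s ≤ lam := mul_le_of_le_one_right hl.le (hg s).2
    linarith
  have hsol : 1 - c ≤ 1 - c * (1 - exp (-kap * t)) := by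
    have : 0 ≤ c * exp (-kap * t) := by positivity
    linarith
  exact ⟨by linarith, by linarith⟩
end
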